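/- For every z ∈ ℂ∖[−1,1]: (1/π) ∫_{−1}^{1} log|t−z| · (T_2(t) − 1)/√(1−t²) dt = log|J₊⁻¹(z)| + log 2 − Re( (J₊⁻¹(z))² )/2, and for every integer k ≥ 3, (1/π) ∫_{−1}^{1} log|t−z| · (T_k(t) − T_{k−2}(t))/√(1−t²) dt = Re( (J₊⁻¹(z))^{k−2}/(k−2) − (J₊⁻¹(z))^{k}/k ). -/

import Mathlib

/-!
Put `w = Jinv z`. Writing `a = √(z - 1)`, `b = √(z + 1)` (principal roots) one has
`w = (a - b)² / 2` and `2z - w = (a + b)² / 2`, so `w (2z - w) = 1`, and `‖w‖ < 1` amounts to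
`0 < Re (a b̄)`. The relation `w (2z - w) = 1` says `1 - 2w cos θ + w² = 2w (z - cos θ)`, and summing the
series of `-log (1 - w e^{±iθ})` gives the cosine series
`-log ‖cos θ - z‖ = log (2‖w‖) + ∑_{n ≥ 1} (2 / n) Re (wⁿ) cos nθ`.
Under `t = cos θ` the weight `dt / √(1 - t²)` becomes `dθ` and `T_n(t)` becomes `cos nθ`, so the
integrals are cosine coefficients of `log ‖cos θ - z‖` on `[0, π]`, read off by orthogonality.
-/

open MeasureTheory Filter Set Polynomial

/-- The inverse of the Joukowsky map `w ↦ (w + w⁻¹) / 2`, taking `ℂ ∖ [-1, 1]` onto the punctured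
unit disc. -/
noncomputable def Jinv (z : ℂ) : ℂ :=
  z - (z - 1) ^ ((1 : ℂ) / 2) * (z + 1) ^ ((1 : ℂ) / 2)

open Real ComplexConjugate

lemma re_cpow_inv_two_mul_conj_nonneg {u v : ℂ} (h : u.im = v.im) :
    0 ≤ (u ^ (2⁻¹ : ℂ) * conj (v ^ (2⁻¹ : ℂ))).re := by
  rw [Complex.mul_re, Complex.conj_re, Complex.conj_im, mul_neg, sub_neg_eq_add,
    Complex.cpow_inv_two_re, Complex.cpow_inv_two_re]
  refine add_nonneg (by positivity) ?_
  rcases le_or_gt 0 u.im with hu | hu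
  · rw [Complex.cpow_inv_two_im_eq_sqrt hu, Complex.cpow_inv_two_im_eq_sqrt (h ▸ hu)]
    positivity
  · rw [Complex.cpow_inv_two_im_eq_neg_sqrt hu, Complex.cpow_inv_two_im_eq_neg_sqrt (h ▸ hu),
      neg_mul_neg]
    positivity

lemma integral_cos_int_mul (k : ℤ) :
    ∫ θ in (0 : ℝ)..π, cos (k * θ) = if k = 0 then π else 0 := by
  split_ifs with hk
  · simp [hk]
  · have hk' : (k : ℝ) ≠ 0 := Int.cast_ne_zero.mpr hk
    simp [intervalIntegral.integral_comp_mul_left (fun x => cos x) hk', sin_int_mul_pi]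

lemma integral_cos_nat_mul_mul_cos (m n : ℕ) :
    ∫ θ in (0 : ℝ)..π, cos (m * θ) * cos (n * θ) =
      if m = n then (if n = 0 then π else π / 2) else 0 := by
  have hprod : ∀ θ : ℝ, cos (m * θ) * cos (n * θ) =
      (cos (((m - n : ℤ) : ℝ) * θ) + cos (((m + n : ℤ) : ℝ) * θ)) / 2 := fun θ => by
    push_cast
    rw [sub_mul, add_mul, cos_sub, cos_add]
    ring
  simp_rw [hprod]
  rw [intervalIntegral.integral_div, intervalIntegral.integral_add
    (Continuous.intervalIntegrable (by fun_prop) _ _)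
    (Continuous.intervalIntegrable (by fun_prop) _ _), integral_cos_int_mul, integral_cos_int_mul]
  split_ifs <;> first | omega | ring

lemma integral_cos_nat_mul (n : ℕ) :
    ∫ θ in (0 : ℝ)..π, cos (n * θ) = if n = 0 then π else 0 := by
  simpa using integral_cos_int_mul n

lemma hasSum_log_norm_one_sub_two_mul_cos_add_sq {w : ℂ} (hw : ‖w‖ < 1) (θ : ℝ) :
    HasSum (fun n : ℕ => 2 * (w ^ n).re / n * cos (n * θ))
      (-log ‖1 - 2 * w * cos θ + w ^ 2‖) := by
  have hu : ∀ s : ℝ, ‖w * Complex.exp (s * Complex.I)‖ < 1 := fun s => by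
    rwa [norm_mul, Complex.norm_exp_ofReal_mul_I, mul_one]
  have hne : ∀ s : ℝ, 1 - w * Complex.exp (s * Complex.I) ≠ 0 := fun s h => by
    simpa [← sub_eq_zero.mp h] using hu s
  have hfactor : 1 - 2 * w * cos θ + w ^ 2 =
      (1 - w * Complex.exp (θ * Complex.I)) * (1 - w * Complex.exp ((-θ : ℝ) * Complex.I)) := by
    have h := Complex.two_cos (θ : ℂ)
    have h' : Complex.exp (θ * Complex.I) * Complex.exp (-θ * Complex.I) = 1 := by
      rw [← Complex.exp_add]; simp
    push_cast
    linear_combination -w * h - w ^ 2 * h'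
  have hsum := Complex.hasSum_re ((Complex.hasSum_taylorSeries_neg_log (hu θ)).add
    (Complex.hasSum_taylorSeries_neg_log (hu (-θ))))
  convert hsum using 1
  · ext n
    have h := Complex.two_cos ((n * θ : ℝ) : ℂ)
    have hc : (w * Complex.exp (θ * Complex.I)) ^ n / n
        + (w * Complex.exp ((-θ : ℝ) * Complex.I)) ^ n / n
        = w ^ n * ((2 * cos (n * θ) / n : ℝ) : ℂ) := by
      simp only [mul_pow, ← Complex.exp_nat_mul]
      push_cast at h ⊢
      ring_nf at h ⊢
      linear_combination -(w ^ n / n) * h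
    rw [hc, Complex.re_mul_ofReal]
    ring
  · rw [hfactor, norm_mul, Real.log_mul (norm_ne_zero_iff.mpr (hne θ))
      (norm_ne_zero_iff.mpr (hne (-θ)))]
    simp only [Complex.add_re, Complex.neg_re, Complex.log_re]
    ring

/-- For `N = 0` the right-hand side is `0` through `x / 0 = 0`, which is also the true value. -/
lemma integral_log_norm_one_sub_two_mul_cos_add_sq_mul_cos {w : ℂ} (hw : ‖w‖ < 1) (N : ℕ) :
    ∫ θ in (0 : ℝ)..π, log ‖1 - 2 * w * cos θ + w ^ 2‖ * cos (N * θ) =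
      -(π * (w ^ N).re / N) := by
  have hcoeff : ∀ n : ℕ, |2 * (w ^ n).re / n| ≤ 2 * ‖w‖ ^ n := fun n => by
    rw [abs_div, abs_mul, abs_two, Nat.abs_cast, ← norm_pow]
    rcases n.eq_zero_or_pos with rfl | hn
    · simp
    · exact div_le_self (by positivity) (by exact_mod_cast hn) |>.trans
        (by gcongr; exact Complex.abs_re_le_norm _)
  have hsum : HasSum
      (fun n : ℕ => ∫ θ in (0 : ℝ)..π, 2 * (w ^ n).re / n * (cos (n * θ) * cos (N * θ)))
      (∫ θ in (0 : ℝ)..π, -log ‖1 - 2 * w * cos θ + w ^ 2‖ * cos (N * θ)) := by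
    refine intervalIntegral.hasSum_integral_of_dominated_convergence (fun n _ => 2 * ‖w‖ ^ n)
      (fun n => by fun_prop) (fun n => .of_forall fun θ _ => ?_)
      (.of_forall fun _ _ => (summable_geometric_of_lt_one (norm_nonneg w) hw).mul_left 2)
      intervalIntegrable_const
      (.of_forall fun θ _ => ?_)
    · rw [Real.norm_eq_abs, abs_mul]
      refine (mul_le_of_le_one_right (abs_nonneg _) ?_).trans (hcoeff n)
      rw [abs_mul]
      exact mul_le_one₀ (abs_cos_le_one _) (abs_nonneg _) (abs_cos_le_one _)
    · simpa only [mul_assoc] using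
        (hasSum_log_norm_one_sub_two_mul_cos_add_sq hw θ).mul_right (cos (N * θ))
  have hterm :
      (fun n : ℕ => ∫ θ in (0 : ℝ)..π, 2 * (w ^ n).re / n * (cos (n * θ) * cos (N * θ))) =
        fun n => if n = N then π * (w ^ N).re / N else 0 := by
    ext n
    rw [intervalIntegral.integral_const_mul, integral_cos_nat_mul_mul_cos]
    split_ifs with h hN
    · simp [h, hN]
    · subst h
      field_simp
    · rw [mul_zero]
  rw [hterm] at hsum
  simp_rw [neg_mul, intervalIntegral.integral_neg] at hsum
  rw [← neg_neg (∫ θ in (0 : ℝ)..π, _), ← (hasSum_ite_eq N _).unique hsum]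

lemma integral_div_sqrt_one_sub_sq (f : ℝ → ℝ) :
    ∫ t in (-1 : ℝ)..1, f t / √(1 - t ^ 2) = ∫ θ in (0 : ℝ)..π, f (cos θ) := by
  have hcov := integral_image_eq_integral_abs_deriv_smul measurableSet_Icc
    (fun θ _ => (hasDerivAt_cos θ).hasDerivWithinAt) injOn_cos (fun t => f t / √(1 - t ^ 2))
  rw [bijOn_cos.image_eq, integral_Icc_eq_integral_Ioc, integral_Icc_eq_integral_Ioo] at hcov
  rw [intervalIntegral.integral_of_le (by norm_num), hcov,
    intervalIntegral.integral_of_le pi_pos.le, integral_Ioc_eq_integral_Ioo]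
  refine setIntegral_congr_fun measurableSet_Ioo fun θ hθ => ?_
  have hsin := sin_pos_of_pos_of_lt_pi hθ.1 hθ.2
  rw [← sin_sq, sqrt_sq hsin.le, abs_neg, abs_of_pos hsin, smul_eq_mul]
  field_simp

section Joukowsky

variable {z : ℂ}

lemma re_sub_one_cpow_inv_two_mul_conj_pos (hz : z ∉ Complex.ofReal '' Icc (-1 : ℝ) 1) :
    0 < ((z - 1) ^ (2⁻¹ : ℂ) * conj ((z + 1) ^ (2⁻¹ : ℂ))).re := by
  set p := (z - 1) ^ (2⁻¹ : ℂ) * conj ((z + 1) ^ (2⁻¹ : ℂ))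
  refine (re_cpow_inv_two_mul_conj_nonneg (by simp)).lt_of_ne fun hp => hz ?_
  -- If `p.re = 0`, then `p ^ 2 = (z - 1) * conj (z + 1) = ‖z‖² - 1 + 2 i z.im` is real and `≤ 0`.
  have hsq : p ^ 2 = (z - 1) * conj (z + 1) := by
    rw [mul_pow, ← map_pow, Complex.cpow_ofNat_inv_pow, Complex.cpow_ofNat_inv_pow]
  have hre := congrArg Complex.re hsq
  have him := congrArg Complex.im hsq
  simp only [pow_two, Complex.mul_re, Complex.mul_im, show p.re = 0 from hp.symm, Complex.sub_re,
    Complex.add_re, Complex.sub_im, Complex.add_im, Complex.conj_re, Complex.conj_im,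
    Complex.one_re, Complex.one_im] at hre him
  have hy : z.im = 0 := by nlinarith
  refine ⟨z.re, ⟨?_, ?_⟩, Complex.ext (by simp) (by simp [hy])⟩ <;> nlinarith

lemma Jinv_eq_sq_div_two (z : ℂ) :
    Jinv z = ((z - 1) ^ (2⁻¹ : ℂ) - (z + 1) ^ (2⁻¹ : ℂ)) ^ 2 / 2 := by
  have h₁ := Complex.cpow_ofNat_inv_pow (z - 1) 2
  have h₂ := Complex.cpow_ofNat_inv_pow (z + 1) 2
  rw [Jinv, one_div]
  linear_combination (-h₁ - h₂) / 2

lemma two_mul_sub_Jinv_eq_sq_div_two (z : ℂ) :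
    2 * z - Jinv z = ((z - 1) ^ (2⁻¹ : ℂ) + (z + 1) ^ (2⁻¹ : ℂ)) ^ 2 / 2 := by
  have h₁ := Complex.cpow_ofNat_inv_pow (z - 1) 2
  have h₂ := Complex.cpow_ofNat_inv_pow (z + 1) 2
  rw [Jinv, one_div]
  linear_combination (-h₁ - h₂) / 2

lemma Jinv_mul_two_mul_sub_Jinv (z : ℂ) : Jinv z * (2 * z - Jinv z) = 1 := by
  have h₁ := Complex.cpow_ofNat_inv_pow (z - 1) 2
  have h₂ := Complex.cpow_ofNat_inv_pow (z + 1) 2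
  rw [two_mul_sub_Jinv_eq_sq_div_two, Jinv_eq_sq_div_two]
  linear_combination (((z - 1) ^ (2⁻¹ : ℂ)) ^ 2 - ((z + 1) ^ (2⁻¹ : ℂ)) ^ 2 - 2) / 4 * (h₁ - h₂)

lemma Jinv_ne_zero (z : ℂ) : Jinv z ≠ 0 :=
  left_ne_zero_of_mul_eq_one (Jinv_mul_two_mul_sub_Jinv z)

lemma norm_Jinv_lt_one (hz : z ∉ Complex.ofReal '' Icc (-1 : ℝ) 1) : ‖Jinv z‖ < 1 := by
  have hlt : ‖Jinv z‖ < ‖2 * z - Jinv z‖ := by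
    rw [two_mul_sub_Jinv_eq_sq_div_two, Jinv_eq_sq_div_two, norm_div, norm_div, norm_pow,
      norm_pow, Complex.sq_norm, Complex.sq_norm, Complex.normSq_sub, Complex.normSq_add]
    gcongr
    · norm_num
    · linarith [re_sub_one_cpow_inv_two_mul_conj_pos hz]
  have hprod : ‖Jinv z‖ * ‖2 * z - Jinv z‖ = 1 := by
    rw [← norm_mul, Jinv_mul_two_mul_sub_Jinv, norm_one]
  nlinarith [norm_nonneg (Jinv z)]

lemma ofReal_cos_sub_ne_zero (hz : z ∉ Complex.ofReal '' Icc (-1 : ℝ) 1) (θ : ℝ) :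
    (cos θ : ℂ) - z ≠ 0 :=
  sub_ne_zero.mpr fun h => hz ⟨cos θ, ⟨neg_one_le_cos θ, cos_le_one θ⟩, h⟩

lemma log_norm_ofReal_cos_sub (hz : z ∉ Complex.ofReal '' Icc (-1 : ℝ) 1) (θ : ℝ) :
    log ‖(cos θ : ℂ) - z‖ =
      log ‖1 - 2 * Jinv z * cos θ + Jinv z ^ 2‖ - log (2 * ‖Jinv z‖) := by
  have hfactor : 1 - 2 * Jinv z * cos θ + Jinv z ^ 2 = -(2 * Jinv z) * ((cos θ : ℂ) - z) := by
    linear_combination -Jinv_mul_two_mul_sub_Jinv z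
  rw [hfactor, norm_mul, norm_neg, norm_mul, Complex.norm_two,
    log_mul (by simpa using Jinv_ne_zero z) (norm_ne_zero_iff.mpr (ofReal_cos_sub_ne_zero hz θ))]
  ring

lemma continuous_log_norm_ofReal_cos_sub (hz : z ∉ Complex.ofReal '' Icc (-1 : ℝ) 1) :
    Continuous fun θ : ℝ => log ‖(cos θ : ℂ) - z‖ :=
  Continuous.log (by fun_prop) fun θ => norm_ne_zero_iff.mpr (ofReal_cos_sub_ne_zero hz θ)

lemma intervalIntegrable_log_norm_ofReal_cos_sub_mul_cos
    (hz : z ∉ Complex.ofReal '' Icc (-1 : ℝ) 1) (N : ℕ) (a b : ℝ) :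
    IntervalIntegrable (fun θ => log ‖(cos θ : ℂ) - z‖ * cos (N * θ)) volume a b :=
  ((continuous_log_norm_ofReal_cos_sub hz).mul (by fun_prop)).intervalIntegrable a b

lemma integral_log_norm_ofReal_cos_sub_mul_cos (hz : z ∉ Complex.ofReal '' Icc (-1 : ℝ) 1)
    (N : ℕ) :
    ∫ θ in (0 : ℝ)..π, log ‖(cos θ : ℂ) - z‖ * cos (N * θ) =
      -(π * (Jinv z ^ N).re / N) - if N = 0 then π * log (2 * ‖Jinv z‖) else 0 := by
  have h := integral_log_norm_one_sub_two_mul_cos_add_sq_mul_cos (norm_Jinv_lt_one hz) N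
  have hsplit : ∀ θ : ℝ, log ‖1 - 2 * Jinv z * cos θ + Jinv z ^ 2‖ * cos (N * θ) =
      log ‖(cos θ : ℂ) - z‖ * cos (N * θ) + log (2 * ‖Jinv z‖) * cos (N * θ) := fun θ => by
    rw [log_norm_ofReal_cos_sub hz]
    ring
  simp_rw [hsplit] at h
  rw [intervalIntegral.integral_add (intervalIntegrable_log_norm_ofReal_cos_sub_mul_cos hz N 0 π)
    (Continuous.intervalIntegrable (by fun_prop) _ _), intervalIntegral.integral_const_mul,
    integral_cos_nat_mul] at h
  rw [← h]
  split_ifs <;> ring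

lemma integral_log_norm_sub_mul_chebyshevT_sub_div_sqrt
    (hz : z ∉ Complex.ofReal '' Icc (-1 : ℝ) 1) (m n : ℕ) :
    ∫ t in (-1 : ℝ)..1,
        log ‖(t : ℂ) - z‖ * (((Chebyshev.T ℝ m).eval t - (Chebyshev.T ℝ n).eval t) / √(1 - t ^ 2)) =
      (∫ θ in (0 : ℝ)..π, log ‖(cos θ : ℂ) - z‖ * cos (m * θ)) -
        ∫ θ in (0 : ℝ)..π, log ‖(cos θ : ℂ) - z‖ * cos (n * θ) := by
  simp_rw [← mul_div_assoc]
  rw [integral_div_sqrt_one_sub_sq, ← intervalIntegral.integral_sub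
    (intervalIntegrable_log_norm_ofReal_cos_sub_mul_cos hz m 0 π)
    (intervalIntegrable_log_norm_ofReal_cos_sub_mul_cos hz n 0 π)]
  simp_rw [Chebyshev.T_real_cos, mul_sub, Int.cast_natCast]

end Joukowsky

/-- Log transforms of modified weighted Chebyshev polynomials
`(T_k - T_{k-2})/√(1-t²)` for `z ∈ ℂ∖[-1,1]`. -/
theorem log_transform_modified_chebyshevT (z : ℂ)
    (hz : z ∉ Complex.ofReal '' Set.Icc (-1 : ℝ) 1) :
    ((1 / Real.pi) *
        ∫ t in (-1 : ℝ)..1,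
          Real.log ‖(t : ℂ) - z‖
            * (((Polynomial.Chebyshev.T ℝ 2).eval t - 1) / Real.sqrt (1 - t ^ 2)))
      = Real.log ‖Jinv z‖ + Real.log 2 - ((Jinv z) ^ 2).re / 2 ∧
    ∀ k : ℕ, 3 ≤ k →
      ((1 / Real.pi) *
          ∫ t in (-1 : ℝ)..1,
            Real.log ‖(t : ℂ) - z‖
              * (((Polynomial.Chebyshev.T ℝ k).eval t
                    - (Polynomial.Chebyshev.T ℝ ((k : ℤ) - 2)).eval t)
                  / Real.sqrt (1 - t ^ 2)))
        = ((Jinv z) ^ (k - 2) / ((k : ℂ) - 2) - (Jinv z) ^ k / k).re := by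
  refine ⟨?_, fun k hk => ?_⟩
  · have hT : ∀ t : ℝ, (Chebyshev.T ℝ 2).eval t - 1 =
        (Chebyshev.T ℝ ((2 : ℕ) : ℤ)).eval t - (Chebyshev.T ℝ ((0 : ℕ) : ℤ)).eval t := by
      simp
    simp_rw [hT]
    rw [integral_log_norm_sub_mul_chebyshevT_sub_div_sqrt hz,
      integral_log_norm_ofReal_cos_sub_mul_cos hz, integral_log_norm_ofReal_cos_sub_mul_cos hz,
      log_mul two_ne_zero (norm_ne_zero_iff.mpr (Jinv_ne_zero z))]
    simp only [Nat.cast_ofNat, Nat.cast_zero, pow_zero, Complex.one_re, div_zero, if_pos,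
      if_neg two_ne_zero]
    field_simp
    ring
  · obtain ⟨j, rfl⟩ : ∃ j, k = j + 2 := ⟨k - 2, by omega⟩
    have hj : (j : ℝ) ≠ 0 := by norm_cast; omega
    rw [show ((j + 2 : ℕ) : ℤ) - 2 = j by omega, Nat.add_sub_cancel,
      show ((j + 2 : ℕ) : ℂ) - 2 = j by push_cast; ring,
      integral_log_norm_sub_mul_chebyshevT_sub_div_sqrt hz,
      integral_log_norm_ofReal_cos_sub_mul_cos hz, integral_log_norm_ofReal_cos_sub_mul_cos hz,
      if_neg (by omega), if_neg (by omega), Complex.sub_re, Complex.div_natCast_re,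
      Complex.div_natCast_re]
    field_simp
    ring
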